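/- Fix K ≥ 2 and smooth functions g_j : 𝕋 → ℝ, j = 1,…,K, with Σ_{j=1}^K g_j(x)² = 1 for all x ∈ 𝕋, and let W be the windowing operator Wu = (g_1 u, …, g_K u) with ‖Wu‖²_{H^{1/2}} = Σ_{j=1}^K ‖g_j u‖²_{H^{1/2}}. Then there exist constants 0 < α ≤ β such that for all u ∈ H^{1/2}(𝕋): α‖Wu‖_{H^{1/2}} ≤ ‖u‖_{H^{1/2}} ≤ β‖Wu‖_{H^{1/2}}. -/

import Mathlib

open MeasureTheory Real AddCircle

noncomputable section

instance : Fact (0 < 2 * π) := ⟨by positivity⟩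

/-- The circle `𝕋 = ℝ/2πℤ`. -/
abbrev Circ : Type := AddCircle (2 * π)

/-- The squared Sobolev norm of order `s` on the circle:
`‖f‖²_{H^s} = Σ_{m∈ℤ} (1+m²)^s |f̂(m)|²`. -/
def sobolevNormSq (s : ℝ) (f : Circ → ℂ) : ℝ :=
  ∑' m : ℤ, (1 + (m : ℝ) ^ 2) ^ s * ‖fourierCoeff f m‖ ^ 2

/-- Membership in the Sobolev space `H^s(𝕋)`, via square-summability of the weighted Fourier
coefficients. -/
def MemSobolev (s : ℝ) (f : Circ → ℂ) : Prop :=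
  Summable fun m : ℤ => (1 + (m : ℝ) ^ 2) ^ s * ‖fourierCoeff f m‖ ^ 2

/-- Smoothness of a function on the circle, expressed via a smooth (periodic) lift to `ℝ`. -/
def SmoothOnCircle {E : Type} [NormedAddCommGroup E] [NormedSpace ℝ E] (g : Circ → E) : Prop :=
  ∃ G : ℝ → E, ContDiff ℝ (⊤ : ℕ∞) G ∧ ∀ t : ℝ, g (t : Circ) = G t

namespace WindowAux

lemma hab : (0:ℝ) < 0 + 2 * π := by positivity

lemma periodic_deriv {F : ℝ → ℂ} (c : ℝ) (h : Function.Periodic F c) :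
    Function.Periodic (deriv F) c := by
  intro x
  have h1 : (fun y => F (y + c)) = F := funext h
  calc deriv F (x + c) = deriv (fun y => F (y + c)) x := (deriv_comp_add_const F c x).symm
  _ = deriv F x := by rw [h1]

lemma coeffOn_deriv {F : ℝ → ℂ} (hF : ContDiff ℝ (↑(⊤:ℕ∞)) F)
    (hper : Function.Periodic F (2 * π)) {n : ℤ} (hn : n ≠ 0) :
    fourierCoeffOn hab F n = (1 / ((n:ℂ) * Complex.I)) * fourierCoeffOn hab (deriv F) n := by
  have hd : ∀ x ∈ Set.uIcc (0:ℝ) (0 + 2*π), HasDerivAt F (deriv F x) x :=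
    fun x _ => (hF.differentiable (by simp)).differentiableAt.hasDerivAt
  have hint : IntervalIntegrable (deriv F) volume 0 (0 + 2*π) :=
    (hF.continuous_deriv (by exact_mod_cast le_top)).intervalIntegrable _ _
  rw [fourierCoeffOn_of_hasDerivAt hab hn hd hint]
  have hz : F (0 + 2*π) - F 0 = 0 := by
    rw [show (0:ℝ) + 2*π = 0 + 2*π from rfl, hper 0, sub_self]
  rw [hz]
  have hπ : (π:ℂ) ≠ 0 := Complex.ofReal_ne_zero.mpr Real.pi_ne_zero
  have hnc : (n:ℂ) ≠ 0 := Int.cast_ne_zero.mpr hn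
  push_cast
  field_simp [Complex.I_ne_zero]
  ring

lemma coeffOn_norm_le {F : ℝ → ℂ} {M : ℝ}
    (hM : ∀ x ∈ Set.Icc (0:ℝ) (0 + 2*π), ‖F x‖ ≤ M) (n : ℤ) :
    ‖fourierCoeffOn hab F n‖ ≤ M := by
  have hM0 : 0 ≤ M := le_trans (norm_nonneg _) (hM 0 ⟨le_refl _, by positivity⟩)
  rw [fourierCoeffOn_eq_integral]
  have h1 : ‖∫ x in (0:ℝ)..(0+2*π), fourier (-n) (x : AddCircle (0+2*π-0)) • F x‖
      ≤ M * |0 + 2*π - 0| := by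
    apply intervalIntegral.norm_integral_le_of_norm_le_const
    intro x hx
    rw [norm_smul]
    have : ‖fourier (-n) ((x:ℝ) : AddCircle (0+2*π-0))‖ = 1 := Circle.norm_coe _
    rw [this, one_mul]
    have hx' : x ∈ Set.Ioc (0:ℝ) (0+2*π) := by
      rwa [Set.uIoc_of_le (by positivity : (0:ℝ) ≤ 0+2*π)] at hx
    exact hM x (Set.mem_Icc_of_Ioc hx')
  rw [norm_smul]
  have h2 : ‖(1 / (0 + 2*π - 0) : ℝ)‖ = 1 / (2*π) := by
    rw [show (0+2*π-0:ℝ) = 2*π by ring, Real.norm_eq_abs, abs_of_pos (by positivity)]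
  calc ‖(1 / (0 + 2*π - 0) : ℝ)‖ * ‖∫ x in (0:ℝ)..(0+2*π), fourier (-n) (x : AddCircle (0+2*π-0)) • F x‖
      ≤ (1/(2*π)) * (M * |0 + 2*π - 0|) := by
        rw [h2]; exact mul_le_mul_of_nonneg_left h1 (by positivity)
    _ = M := by
        rw [show (0+2*π-0:ℝ) = 2*π by ring, abs_of_pos (by positivity : (0:ℝ) < 2*π)]
        field_simp

lemma smooth_lift {g : Circ → ℝ} (hg : SmoothOnCircle g) :
    ∃ F : ℝ → ℂ, ContDiff ℝ (↑(⊤:ℕ∞)) F ∧ Function.Periodic F (2*π) ∧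
      (fun x : Circ => ((g x : ℝ) : ℂ)) = AddCircle.liftIoc (2*π) 0 F := by
  obtain ⟨G, hG, hlift⟩ := hg
  refine ⟨fun t => ((G t : ℝ) : ℂ), Complex.ofRealCLM.contDiff.comp (hG.of_le (by simp)), ?_, ?_⟩
  · intro x
    simp only [Complex.ofReal_inj]
    rw [← hlift, ← hlift]
    exact congrArg g (AddCircle.coe_add_period (2*π) x)
  · funext x
    have hx : ((((equivIoc (2*π) 0) x : Set.Ioc (0:ℝ) (0+2*π)) : ℝ) : Circ) = x :=
      (equivIoc (2*π) 0).symm_apply_apply x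
    set t := ((equivIoc (2*π) 0) x : Set.Ioc (0:ℝ) (0+2*π)) with ht
    rw [← hx, liftIoc_coe_apply t.2, hlift]

lemma smooth_decay {g : Circ → ℝ} (hg : SmoothOnCircle g) :
    ∃ M : ℝ, 0 ≤ M ∧ (∀ n : ℤ, ‖fourierCoeff (fun x : Circ => ((g x : ℝ):ℂ)) n‖ ≤ M) ∧
      ∀ n : ℤ, n ≠ 0 → ‖fourierCoeff (fun x : Circ => ((g x : ℝ):ℂ)) n‖ ≤ M / |(n:ℝ)|^3 := by
  obtain ⟨F, hF, hper, hfun⟩ := smooth_lift hg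
  have hF1 : ContDiff ℝ (↑(⊤:ℕ∞)) (deriv F) := (contDiff_infty_iff_deriv.mp hF).2
  have hF2 : ContDiff ℝ (↑(⊤:ℕ∞)) (deriv (deriv F)) := (contDiff_infty_iff_deriv.mp hF1).2
  have hF3cont : Continuous (deriv (deriv (deriv F))) :=
    (contDiff_infty_iff_deriv.mp hF2).2.continuous
  have hper1 := periodic_deriv _ hper
  have hper2 := periodic_deriv _ hper1
  have hcoeff : ∀ n : ℤ, fourierCoeff (fun x : Circ => ((g x:ℝ):ℂ)) n = fourierCoeffOn hab F n := by
    intro n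
    rw [hfun]
    exact fourierCoeff_liftIoc_eq F n
  obtain ⟨M0, hM0⟩ := (isCompact_Icc (a := (0:ℝ)) (b := 0+2*π)).exists_bound_of_continuousOn
      hF.continuous.continuousOn
  obtain ⟨M3, hM3⟩ := (isCompact_Icc (a := (0:ℝ)) (b := 0+2*π)).exists_bound_of_continuousOn
      hF3cont.continuousOn
  have hM0' : 0 ≤ M0 := le_trans (norm_nonneg _) (hM0 0 ⟨le_refl _, by positivity⟩)
  refine ⟨max M0 M3, le_trans hM0' (le_max_left _ _), ?_, ?_⟩
  · intro n
    rw [hcoeff n]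
    exact le_trans (coeffOn_norm_le hM0 n) (le_max_left _ _)
  · intro n hn
    have key : fourierCoeffOn hab F n =
        (1/((n:ℂ)*Complex.I))^3 * fourierCoeffOn hab (deriv (deriv (deriv F))) n := by
      rw [coeffOn_deriv hF hper hn, coeffOn_deriv hF1 hper1 hn, coeffOn_deriv hF2 hper2 hn]
      ring
    rw [hcoeff n, key]
    have hnorm : ‖(1/((n:ℂ)*Complex.I))^3‖ = 1/|(n:ℝ)|^3 := by
      rw [norm_pow, norm_div, norm_one, norm_mul, Complex.norm_I, mul_one]
      rw [show ((n:ℂ)) = ((n:ℝ):ℂ) by push_cast; rfl, Complex.norm_real, Real.norm_eq_abs]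
      rw [div_pow, one_pow]
    rw [norm_mul, hnorm]
    have h3 : ‖fourierCoeffOn hab (deriv (deriv (deriv F))) n‖ ≤ M3 := coeffOn_norm_le hM3 n
    calc 1/|(n:ℝ)|^3 * ‖fourierCoeffOn hab (deriv (deriv (deriv F))) n‖
        ≤ 1/|(n:ℝ)|^3 * max M0 M3 := by
          apply mul_le_mul_of_nonneg_left (le_trans h3 (le_max_right _ _)) (by positivity)
      _ = max M0 M3 / |(n:ℝ)|^3 := by ring

lemma smooth_summable {g : Circ → ℝ} (hg : SmoothOnCircle g) :
    Summable (fun n : ℤ => (2:ℝ)^((1:ℝ)/4) *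
      ((1 + (n:ℝ)^2)^((1:ℝ)/4) * ‖fourierCoeff (fun x : Circ => ((g x : ℝ):ℂ)) n‖)) := by
  obtain ⟨M, hM0, hMall, hMdec⟩ := smooth_decay hg
  set f : ℤ → ℝ := fun n => (2:ℝ)^((1:ℝ)/4) *
      ((1 + (n:ℝ)^2)^((1:ℝ)/4) * ‖fourierCoeff (fun x : Circ => ((g x : ℝ):ℂ)) n‖) with hf
  set c : ℝ := (2:ℝ)^((1:ℝ)/4) * (Real.sqrt 2 * M) with hc
  have hbase : Summable (fun n : ℤ => c * (1/(n:ℝ)^2)) :=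
    (summable_one_div_int_pow.mpr one_lt_two).mul_left c
  have hupd : Summable (Function.update (fun n : ℤ => c * (1/(n:ℝ)^2)) 0 (f 0)) :=
    hbase.update 0 (f 0)
  apply hupd.of_nonneg_of_le
  · intro n; rw [hf]; positivity
  · intro n
    by_cases hn : n = 0
    · subst hn; rw [Function.update_self]
    · rw [Function.update_of_ne hn]
      have hn2 : (1:ℝ) ≤ (n:ℝ)^2 := by
        have : (1:ℝ) ≤ |(n:ℝ)| := by
          rw [← Int.cast_abs]; exact_mod_cast Int.one_le_abs hn
        nlinarith [mul_le_mul this this zero_le_one (abs_nonneg ((n:ℝ))), sq_abs ((n:ℝ))]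
      have habs : |(n:ℝ)| ≠ 0 := by
        simp only [ne_eq, abs_eq_zero, Int.cast_eq_zero]; exact hn
      have h1 : (1+(n:ℝ)^2) ^ ((1:ℝ)/4) ≤ (1+(n:ℝ)^2) ^ ((1:ℝ)/2) :=
        Real.rpow_le_rpow_of_exponent_le (by nlinarith) (by norm_num)
      have h2 : (1+(n:ℝ)^2) ^ ((1:ℝ)/2) ≤ Real.sqrt 2 * |(n:ℝ)| := by
        rw [show ((1:ℝ)+(n:ℝ)^2) ^ ((1:ℝ)/2) = Real.sqrt (1+(n:ℝ)^2) from
          (Real.sqrt_eq_rpow _).symm]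
        rw [show Real.sqrt 2 * |(n:ℝ)| = Real.sqrt (2*(n:ℝ)^2) by
          rw [Real.sqrt_mul (by norm_num), Real.sqrt_sq_eq_abs]]
        exact Real.sqrt_le_sqrt (by nlinarith)
      have hcoe : ‖fourierCoeff (fun x : Circ => ((g x : ℝ):ℂ)) n‖ ≤ M / |(n:ℝ)|^3 :=
        hMdec n hn
      have hchain : f n ≤ (2:ℝ)^((1:ℝ)/4) * ((Real.sqrt 2 * |(n:ℝ)|) * (M / |(n:ℝ)|^3)) := by
        rw [hf]
        apply mul_le_mul_of_nonneg_left _ (by positivity)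
        apply mul_le_mul (le_trans h1 h2) hcoe (norm_nonneg _) (by positivity)
      refine le_trans hchain (le_of_eq ?_)
      rw [hc]
      rw [show |(n:ℝ)|^3 = (n:ℝ)^2 * |(n:ℝ)| by rw [← sq_abs]; ring]
      field_simp

open scoped ENNReal

def nc (f : Circ → ℂ) (m : ℤ) : ℝ≥0∞ := ENNReal.ofReal ‖fourierCoeff f m‖

def w4 (m : ℤ) : ℝ≥0∞ := ENNReal.ofReal ((1 + (m:ℝ)^2) ^ ((1:ℝ)/4))

def EE (f : Circ → ℂ) : ℝ≥0∞ := ∑' m : ℤ, (w4 m * nc f m)^2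

lemma EE_eq (f : Circ → ℂ) :
    EE f = ∑' m : ℤ, ENNReal.ofReal ((1 + (m:ℝ)^2) ^ ((1:ℝ)/2) * ‖fourierCoeff f m‖^2) := by
  unfold EE
  congr 1; funext m
  rw [mul_pow, w4, nc, ← ENNReal.ofReal_pow (by positivity), ← ENNReal.ofReal_pow (norm_nonneg _),
    ← ENNReal.ofReal_mul (by positivity)]
  congr 2
  rw [← Real.rpow_natCast ((1+(m:ℝ)^2)^((1:ℝ)/4)) 2, ← Real.rpow_mul (by positivity)]
  norm_num

lemma memSobolev_iff {f : Circ → ℂ} : MemSobolev (1/2) f ↔ EE f ≠ ⊤ := by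
  rw [EE_eq]
  constructor
  · intro h
    rw [← ENNReal.ofReal_tsum_of_nonneg (fun m => by positivity) h]
    exact ENNReal.ofReal_ne_top
  · intro h
    apply (ENNReal.summable_toReal h).congr
    intro m; rw [ENNReal.toReal_ofReal (by positivity)]

lemma sobolev_toReal {f : Circ → ℂ} (h : EE f ≠ ⊤) :
    sobolevNormSq (1/2) f = (EE f).toReal := by
  rw [EE_eq, sobolevNormSq, ENNReal.tsum_toReal_eq (fun m => ENNReal.ofReal_ne_top)]
  congr 1; funext m; rw [ENNReal.toReal_ofReal (by positivity)]

lemma rpow_half_sq (x : ℝ≥0∞) : (x ^ ((1:ℝ)/2))^2 = x := by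
  rw [← ENNReal.rpow_natCast (x ^ ((1:ℝ)/2)) 2, ← ENNReal.rpow_mul]
  norm_num

lemma half_mul_half (x : ℝ≥0∞) : x ^ ((1:ℝ)/2) * x ^ ((1:ℝ)/2) = x := by
  rw [← sq, rpow_half_sq]

lemma cauchy (x y : ℤ → ℝ≥0∞) :
    (∑' n, x n * y n)^2 ≤ (∑' n, (x n)^2) * (∑' n, (y n)^2) := by
  have hpq : Real.HolderConjugate 2 2 := .two_two
  have h := ENNReal.lintegral_mul_le_Lp_mul_Lq (Measure.count : Measure ℤ) hpq
      (measurable_of_countable x).aemeasurable (measurable_of_countable y).aemeasurable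
  simp only [Pi.mul_apply, lintegral_count] at h
  have h2 : ∀ z : ℤ → ℝ≥0∞, (∑' n, z n ^ (2:ℝ)) = ∑' n, (z n)^2 := by
    intro z
    congr 1; funext n
    rw [show (2:ℝ) = ((2:ℕ):ℝ) by norm_num, ENNReal.rpow_natCast]
  rw [h2 x, h2 y] at h
  calc (∑' n, x n * y n)^2
      ≤ ((∑' n, (x n)^2) ^ ((1:ℝ)/2) * (∑' n, (y n)^2) ^ ((1:ℝ)/2))^2 := by
        exact pow_le_pow_left' h 2
    _ = (∑' n, (x n)^2) * (∑' n, (y n)^2) := by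
        rw [mul_pow, rpow_half_sq, rpow_half_sq]

lemma young (a c : ℤ → ℝ≥0∞) :
    (∑' m, (∑' n, a n * c (m - n))^2) ≤ (∑' n, a n)^2 * ∑' k, (c k)^2 := by
  have key : ∀ m : ℤ, (∑' n, a n * c (m - n))^2 ≤ (∑' n, a n) * ∑' n, a n * (c (m-n))^2 := by
    intro m
    have h1 : (fun n => a n * c (m-n)) =
        fun n => (a n ^ ((1:ℝ)/2)) * ((a n ^ ((1:ℝ)/2)) * c (m-n)) := by
      funext n
      rw [← mul_assoc, half_mul_half]
    calc (∑' n, a n * c (m - n))^2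
        = (∑' n, (a n ^ ((1:ℝ)/2)) * ((a n ^ ((1:ℝ)/2)) * c (m-n)))^2 := by rw [← h1]
      _ ≤ (∑' n, (a n ^ ((1:ℝ)/2))^2) * (∑' n, ((a n ^ ((1:ℝ)/2)) * c (m-n))^2) := cauchy _ _
      _ = (∑' n, a n) * ∑' n, a n * (c (m-n))^2 := by
          congr 1
          · congr 1; funext n; rw [rpow_half_sq]
          · congr 1; funext n; rw [mul_pow, rpow_half_sq]
  calc (∑' m, (∑' n, a n * c (m - n))^2)
      ≤ ∑' m, (∑' n, a n) * ∑' n, a n * (c (m-n))^2 := ENNReal.tsum_le_tsum key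
    _ = (∑' n, a n) * ∑' m : ℤ, ∑' n : ℤ, a n * (c (m-n))^2 := ENNReal.tsum_mul_left
    _ = (∑' n, a n) * ∑' n : ℤ, ∑' m : ℤ, a n * (c (m-n))^2 := by rw [ENNReal.tsum_comm]
    _ = (∑' n, a n) * ∑' n : ℤ, a n * ∑' m : ℤ, (c (m-n))^2 := by
        congr 1; congr 1; funext n; exact ENNReal.tsum_mul_left
    _ = (∑' n, a n) * ∑' n : ℤ, a n * ∑' k : ℤ, (c k)^2 := by
        congr 1; congr 1; funext n; congr 1
        exact (Equiv.subRight n).tsum_eq (fun k => (c k)^2)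
    _ = (∑' n, a n)^2 * ∑' k, (c k)^2 := by
        rw [ENNReal.tsum_mul_right, sq]; ring

lemma sq_sum_le {J : Type} [Fintype J] (x : J → ℝ≥0∞) :
    (∑ j, x j)^2 ≤ (2 * (Fintype.card J : ℝ≥0∞)) * ∑ j, (x j)^2 := by
  have hij : ∀ i j : J, x i * x j ≤ (x i)^2 + (x j)^2 := by
    intro i j
    rcases le_total (x i) (x j) with h | h
    · calc x i * x j ≤ x j * x j := mul_le_mul_left h _
        _ = (x j)^2 := (sq _).symm
        _ ≤ _ := le_add_self
    · calc x i * x j ≤ x i * x i := mul_le_mul_right h _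
        _ = (x i)^2 := (sq _).symm
        _ ≤ _ := self_le_add_right _ _
  calc (∑ j, x j)^2 = ∑ i : J, ∑ j : J, x i * x j := by rw [sq, Finset.sum_mul_sum]
    _ ≤ ∑ i : J, ∑ j : J, ((x i)^2 + (x j)^2) :=
        Finset.sum_le_sum (fun i _ => Finset.sum_le_sum (fun j _ => hij i j))
    _ = (2 * (Fintype.card J : ℝ≥0∞)) * ∑ j, (x j)^2 := by
        have hrow : ∀ i : J, ∑ j : J, ((x i)^2 + (x j)^2)
            = (Fintype.card J : ℝ≥0∞) * (x i)^2 + ∑ j, (x j)^2 := by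
          intro i
          rw [Finset.sum_add_distrib, Finset.sum_const, Finset.card_univ, nsmul_eq_mul]
        simp_rw [hrow]
        rw [Finset.sum_add_distrib, Finset.sum_const, Finset.card_univ, nsmul_eq_mul,
          ← Finset.mul_sum]
        ring

lemma norm_fourierCoeff_le (u : Circ → ℂ) (k : ℤ) :
    ‖fourierCoeff u k‖ ≤ ∫ x : Circ, ‖u x‖ ∂haarAddCircle := by
  rw [fourierCoeff]
  refine le_trans (norm_integral_le_integral_norm _) (le_of_eq ?_)
  congr 1; funext x
  rw [norm_smul, show ‖fourier (-k) x‖ = 1 from Circle.norm_coe _, one_mul]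

lemma hasSum_coeff_mul (gC : Circ → ℂ) (hcont : Continuous gC)
    (hsum : Summable (fun n => ‖fourierCoeff gC n‖))
    (u : Circ → ℂ) (hint : Integrable u haarAddCircle) (m : ℤ) :
    HasSum (fun n => fourierCoeff gC n * fourierCoeff u (m - n))
      (fourierCoeff (fun x => gC x * u x) m) := by
  set gCm : C(Circ, ℂ) := ⟨gC, hcont⟩ with hgCm
  have hcoeq : ∀ n, fourierCoeff (⇑gCm) n = fourierCoeff gC n := fun n => rfl
  have hsum' : Summable (fourierCoeff (⇑gCm)) := hsum.of_norm
  have hpt : ∀ x : Circ, HasSum (fun n => fourierCoeff gC n • fourier n x) (gC x) := by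
    intro x
    exact has_pointwise_sum_fourier_series_of_summable hsum' x
  have hsummable : Summable (fun n => fourierCoeff gC n * fourierCoeff u (m - n)) := by
    apply Summable.of_norm
    apply Summable.of_nonneg_of_le (fun n => norm_nonneg _)
      (fun n => ?_) (hsum.mul_right (∫ x : Circ, ‖u x‖ ∂haarAddCircle))
    rw [norm_mul]
    exact mul_le_mul_of_nonneg_left (norm_fourierCoeff_le u (m - n)) (norm_nonneg _)
  have heq : fourierCoeff (fun x => gC x * u x) m
      = ∑' n, fourierCoeff gC n * fourierCoeff u (m - n) := by
    have hint_eq : fourierCoeff (fun x => gC x * u x) m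
        = ∫ x : Circ, ∑' n : ℤ, fourierCoeff gC n * fourier n x * (fourier (-m) x * u x)
            ∂haarAddCircle := by
      rw [fourierCoeff]
      congr 1; funext x
      have h2 : HasSum (fun n => fourierCoeff gC n • fourier n x * (fourier (-m) x * u x))
          (gC x * (fourier (-m) x * u x)) := (hpt x).mul_right _
      have h3 : (∑' n, fourierCoeff gC n * fourier n x * (fourier (-m) x * u x))
          = gC x * (fourier (-m) x * u x) := by
        rw [← h2.tsum_eq]
        exact tsum_congr fun n => by rw [smul_eq_mul]
      rw [h3, smul_eq_mul]
      try ring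
    rw [hint_eq]
    rw [MeasureTheory.integral_tsum ?hmeas ?hbound]
    · congr 1; funext n
      have h4 : ∀ x : Circ, fourierCoeff gC n * fourier n x * (fourier (-m) x * u x)
          = fourierCoeff gC n * (fourier (-(m - n)) x • u x) := by
        intro x
        rw [show -(m - n) = n + -m by ring, fourier_add, smul_eq_mul]
        ring
      simp_rw [h4]
      rw [MeasureTheory.integral_const_mul, ← fourierCoeff]
    case hmeas =>
      intro n
      apply AEStronglyMeasurable.mul
      · exact (continuous_const.mul (map_continuous (fourier n))).aestronglyMeasurable
      · exact ((map_continuous (fourier (-m))).aestronglyMeasurable).mul hint.1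
    case hbound =>
      have hterm : ∀ n : ℤ, (∫⁻ x : Circ, ↑‖fourierCoeff gC n * fourier n x *
          (fourier (-m) x * u x)‖₊ ∂haarAddCircle)
          = (‖fourierCoeff gC n‖₊ : ℝ≥0∞) * ∫⁻ x : Circ, ‖u x‖₊ ∂haarAddCircle := by
        intro n
        rw [← MeasureTheory.lintegral_const_mul' _ _ ENNReal.coe_ne_top]
        congr 1; funext x
        rw [← ENNReal.coe_mul]
        congr 1
        apply NNReal.coe_injective
        simp only [NNReal.coe_mul, coe_nnnorm]
        have e1 : ‖fourier n x‖ = 1 := Circle.norm_coe _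
        have e2 : ‖fourier (-m) x‖ = 1 := Circle.norm_coe _
        calc ‖fourierCoeff gC n * fourier n x * (fourier (-m) x * u x)‖
            = ‖fourierCoeff gC n‖ * ‖fourier n x‖ * (‖fourier (-m) x‖ * ‖u x‖) := by
              rw [norm_mul, norm_mul, norm_mul]
          _ = ‖fourierCoeff gC n‖ * ‖u x‖ := by rw [e1, e2]; ring
      simp_rw [enorm_eq_nnnorm, hterm]
      rw [ENNReal.tsum_mul_right]
      apply ENNReal.mul_ne_top
      · apply ENNReal.tsum_coe_ne_top_iff_summable.mpr
        rw [← NNReal.summable_coe]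
        simpa only [coe_nnnorm] using hsum
      · exact hint.2.ne
  exact heq ▸ hsummable.hasSum

def Ag (gC : Circ → ℂ) (n : ℤ) : ℝ≥0∞ :=
  ENNReal.ofReal ((2:ℝ)^((1:ℝ)/4) * ((1 + (n:ℝ)^2)^((1:ℝ)/4) * ‖fourierCoeff gC n‖))

lemma Ag_ne_top {g : Circ → ℝ} (hg : SmoothOnCircle g) :
    (∑' n, Ag (fun x => ((g x:ℝ):ℂ)) n) ≠ ⊤ := by
  simp only [Ag]
  rw [← ENNReal.ofReal_tsum_of_nonneg (fun n => by positivity) (smooth_summable hg)]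
  exact ENNReal.ofReal_ne_top

lemma Ag_def (gC : Circ → ℂ) (n : ℤ) : Ag gC n =
    ENNReal.ofReal ((2:ℝ)^((1:ℝ)/4) * ((1 + (n:ℝ)^2)^((1:ℝ)/4) * ‖fourierCoeff gC n‖)) := rfl

lemma w4_def (m : ℤ) : w4 m = ENNReal.ofReal ((1 + (m:ℝ)^2) ^ ((1:ℝ)/4)) := rfl

lemma nc_def (f : Circ → ℂ) (m : ℤ) : nc f m = ENNReal.ofReal ‖fourierCoeff f m‖ := rfl

lemma peetre (m n : ℤ) : (1 + (m:ℝ)^2)^((1:ℝ)/4) ≤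
    (2:ℝ)^((1:ℝ)/4) * ((1 + (n:ℝ)^2)^((1:ℝ)/4) * (1 + ((m - n : ℤ):ℝ)^2)^((1:ℝ)/4)) := by
  have h1 : (1:ℝ) + (m:ℝ)^2 ≤ 2 * ((1 + (n:ℝ)^2) * (1 + ((m - n : ℤ):ℝ)^2)) := by
    push_cast
    nlinarith [sq_nonneg ((n:ℝ) - ((m:ℝ) - n)), sq_nonneg ((n:ℝ) * ((m:ℝ) - n))]
  calc (1 + (m:ℝ)^2)^((1:ℝ)/4)
      ≤ (2 * ((1 + (n:ℝ)^2) * (1 + ((m - n : ℤ):ℝ)^2)))^((1:ℝ)/4) :=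
        Real.rpow_le_rpow (by positivity) h1 (by norm_num)
    _ = _ := by
        rw [Real.mul_rpow (by norm_num) (by positivity),
          Real.mul_rpow (by positivity) (by positivity)]

lemma EE_mul_le (gC : Circ → ℂ) (hcont : Continuous gC)
    (hsum : Summable (fun n => ‖fourierCoeff gC n‖))
    (u : Circ → ℂ) (hint : Integrable u haarAddCircle) :
    EE (fun x => gC x * u x) ≤ (∑' n, Ag gC n)^2 * EE u := by
  have hpw : ∀ m : ℤ, w4 m * nc (fun x => gC x * u x) m ≤
      ∑' n, Ag gC n * (w4 (m - n) * nc u (m - n)) := by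
    intro m
    have hconv := hasSum_coeff_mul gC hcont hsum u hint m
    have hsum2 : Summable (fun n => ‖fourierCoeff gC n‖ * ‖fourierCoeff u (m-n)‖) := by
      apply Summable.of_nonneg_of_le (fun n => by positivity)
        (fun n => ?_) (hsum.mul_right (∫ x : Circ, ‖u x‖ ∂haarAddCircle))
      exact mul_le_mul_of_nonneg_left (norm_fourierCoeff_le u (m - n)) (norm_nonneg _)
    have hnorm : ‖fourierCoeff (fun x => gC x * u x) m‖ ≤
        ∑' n, ‖fourierCoeff gC n‖ * ‖fourierCoeff u (m-n)‖ := by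
      rw [← hconv.tsum_eq]
      refine le_trans (norm_tsum_le_tsum_norm ?_) (le_of_eq (tsum_congr fun n => norm_mul _ _))
      exact hsum2.congr (fun n => (norm_mul _ _).symm)
    calc w4 m * nc (fun x => gC x * u x) m
        ≤ w4 m * ENNReal.ofReal (∑' n, ‖fourierCoeff gC n‖ * ‖fourierCoeff u (m-n)‖) :=
          mul_le_mul_right (ENNReal.ofReal_le_ofReal hnorm) _
      _ = w4 m * ∑' n, ENNReal.ofReal (‖fourierCoeff gC n‖ * ‖fourierCoeff u (m-n)‖) := by
          rw [ENNReal.ofReal_tsum_of_nonneg (fun n => by positivity) hsum2]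
      _ = ∑' n, w4 m * ENNReal.ofReal (‖fourierCoeff gC n‖ * ‖fourierCoeff u (m-n)‖) :=
          ENNReal.tsum_mul_left.symm
      _ ≤ ∑' n, Ag gC n * (w4 (m - n) * nc u (m - n)) := by
          apply ENNReal.tsum_le_tsum
          intro n
          rw [w4_def, w4_def, nc_def, Ag_def]
          rw [← ENNReal.ofReal_mul (by positivity), ← ENNReal.ofReal_mul (by positivity),
            ← ENNReal.ofReal_mul (by positivity)]
          apply ENNReal.ofReal_le_ofReal
          calc (1 + (m:ℝ)^2)^((1:ℝ)/4) * (‖fourierCoeff gC n‖ * ‖fourierCoeff u (m-n)‖)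
              ≤ ((2:ℝ)^((1:ℝ)/4) * ((1 + (n:ℝ)^2)^((1:ℝ)/4) *
                  (1 + ((m - n : ℤ):ℝ)^2)^((1:ℝ)/4))) *
                  (‖fourierCoeff gC n‖ * ‖fourierCoeff u (m-n)‖) :=
                mul_le_mul_of_nonneg_right (peetre m n) (by positivity)
            _ = (2:ℝ)^((1:ℝ)/4) * ((1 + (n:ℝ)^2)^((1:ℝ)/4) * ‖fourierCoeff gC n‖) *
                  ((1 + ((m - n : ℤ):ℝ)^2)^((1:ℝ)/4) * ‖fourierCoeff u (m-n)‖) := by ring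
  calc EE (fun x => gC x * u x)
      = ∑' m, (w4 m * nc (fun x => gC x * u x) m)^2 := rfl
    _ ≤ ∑' m, (∑' n, Ag gC n * (w4 (m - n) * nc u (m - n)))^2 :=
        ENNReal.tsum_le_tsum (fun m => pow_le_pow_left' (hpw m) 2)
    _ ≤ (∑' n, Ag gC n)^2 * ∑' k, (w4 k * nc u k)^2 := young _ _
    _ = (∑' n, Ag gC n)^2 * EE u := rfl

lemma smooth_continuous {g : Circ → ℝ} (hg : SmoothOnCircle g) :
    Continuous (fun x : Circ => ((g x : ℝ):ℂ)) := by
  obtain ⟨G, hG, hlift⟩ := hg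
  have hcomp : Continuous (fun t : ℝ => ((g (t:Circ) : ℝ):ℂ)) := by
    have : (fun t : ℝ => ((g (t:Circ) : ℝ):ℂ)) = fun t : ℝ => ((G t : ℝ):ℂ) := by
      funext t; rw [hlift]
    rw [this]
    exact Complex.continuous_ofReal.comp hG.continuous
  exact ((QuotientAddGroup.isQuotientMap_mk _).continuous_iff).mpr hcomp

lemma bounded_of_continuous {f : Circ → ℂ} (hf : Continuous f) : ∃ C, ∀ x, ‖f x‖ ≤ C := by
  obtain ⟨x₀, -, hx₀⟩ := isCompact_univ.exists_isMaxOn Set.univ_nonempty hf.norm.continuousOn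
  exact ⟨‖f x₀‖, fun x => hx₀ (Set.mem_univ x)⟩

lemma integrable_mul {f : Circ → ℂ} (hf : Continuous f) {u : Circ → ℂ}
    (hu : Integrable u haarAddCircle) : Integrable (fun x => f x * u x) haarAddCircle :=
  hu.bdd_mul hf.aestronglyMeasurable (Filter.Eventually.of_forall (bounded_of_continuous hf).choose_spec)

lemma fourierCoeff_sum {J : Type} [Fintype J] (f : J → Circ → ℂ)
    (hf : ∀ j, Integrable (f j) haarAddCircle) (m : ℤ) :
    fourierCoeff (fun x => ∑ j, f j x) m = ∑ j, fourierCoeff (f j) m := by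
  simp only [fourierCoeff, smul_eq_mul, Finset.mul_sum]
  rw [integral_finset_sum]
  intro j _
  exact ((hf j).bdd_mul (map_continuous (fourier (-m))).aestronglyMeasurable
    (c := 1) (Filter.Eventually.of_forall fun x => le_of_eq (Circle.norm_coe _)))

lemma one_le_rpow' {x : ℝ} (hx : 1 ≤ x) {c : ℝ} (hc : 0 ≤ c) : (1:ℝ) ≤ x ^ c := by
  calc (1:ℝ) = 1 ^ c := (Real.one_rpow c).symm
    _ ≤ x ^ c := Real.rpow_le_rpow zero_le_one hx hc

lemma EE_le_sum {K : ℕ} (g : Fin K → Circ → ℝ)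
    (hcont : ∀ j, Continuous (fun x : Circ => ((g j x:ℝ):ℂ)))
    (hpart : ∀ x : Circ, ∑ j, (g j x)^2 = 1)
    (u : Circ → ℂ) (hint : Integrable u haarAddCircle) :
    EE u ≤ (2 * (K:ℝ≥0∞)) *
      ∑ j, EE (fun x => ((g j x:ℝ):ℂ) * (((g j x:ℝ):ℂ) * u x)) := by
  have hintj : ∀ j : Fin K,
      Integrable (fun x => ((g j x:ℝ):ℂ) * (((g j x:ℝ):ℂ) * u x)) haarAddCircle :=
    fun j => integrable_mul (hcont j) (integrable_mul (hcont j) hint)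
  have hdecomp : ∀ x : Circ, u x = ∑ j, ((g j x:ℝ):ℂ) * (((g j x:ℝ):ℂ) * u x) := by
    intro x
    have h1 : (∑ j, (((g j x:ℝ):ℂ))^2) = 1 := by
      have := hpart x
      rw [show (1:ℂ) = ((1:ℝ):ℂ) by norm_num, ← this]
      push_cast
      rfl
    calc u x = (∑ j, (((g j x:ℝ):ℂ))^2) * u x := by rw [h1, one_mul]
      _ = ∑ j, ((g j x:ℝ):ℂ) * (((g j x:ℝ):ℂ) * u x) := by
          rw [Finset.sum_mul]
          congr 1; funext j; ring
  have hc : ∀ m : ℤ, fourierCoeff u m =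
      ∑ j, fourierCoeff (fun x => ((g j x:ℝ):ℂ) * (((g j x:ℝ):ℂ) * u x)) m := by
    intro m
    calc fourierCoeff u m
        = fourierCoeff (fun x => ∑ j, ((g j x:ℝ):ℂ) * (((g j x:ℝ):ℂ) * u x)) m := by
          congr 1; funext x; exact hdecomp x
      _ = _ := fourierCoeff_sum _ hintj m
  have hpw : ∀ m : ℤ, (w4 m * nc u m)^2 ≤ (2 * (K:ℝ≥0∞)) *
      ∑ j, (w4 m * nc (fun x => ((g j x:ℝ):ℂ) * (((g j x:ℝ):ℂ) * u x)) m)^2 := by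
    intro m
    have h2 : nc u m ≤ ∑ j, nc (fun x => ((g j x:ℝ):ℂ) * (((g j x:ℝ):ℂ) * u x)) m := by
      rw [nc_def, hc m]
      refine le_trans (ENNReal.ofReal_le_ofReal (norm_sum_le _ _)) (le_of_eq ?_)
      rw [ENNReal.ofReal_sum_of_nonneg (fun j _ => norm_nonneg _)]
      rfl
    have h3 : w4 m * nc u m ≤
        ∑ j, w4 m * nc (fun x => ((g j x:ℝ):ℂ) * (((g j x:ℝ):ℂ) * u x)) m := by
      rw [← Finset.mul_sum]
      exact mul_le_mul_right h2 _
    calc (w4 m * nc u m)^2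
        ≤ (∑ j, w4 m * nc (fun x => ((g j x:ℝ):ℂ) * (((g j x:ℝ):ℂ) * u x)) m)^2 :=
          pow_le_pow_left' h3 2
      _ ≤ (2 * ((Fintype.card (Fin K) : ℝ≥0∞))) *
          ∑ j, (w4 m * nc (fun x => ((g j x:ℝ):ℂ) * (((g j x:ℝ):ℂ) * u x)) m)^2 :=
          sq_sum_le _
      _ = _ := by rw [Fintype.card_fin]
  calc EE u = ∑' m, (w4 m * nc u m)^2 := rfl
    _ ≤ ∑' m, (2 * (K:ℝ≥0∞)) *
        ∑ j, (w4 m * nc (fun x => ((g j x:ℝ):ℂ) * (((g j x:ℝ):ℂ) * u x)) m)^2 :=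
        ENNReal.tsum_le_tsum hpw
    _ = (2 * (K:ℝ≥0∞)) * ∑' m, ∑ j,
        (w4 m * nc (fun x => ((g j x:ℝ):ℂ) * (((g j x:ℝ):ℂ) * u x)) m)^2 :=
        ENNReal.tsum_mul_left
    _ = (2 * (K:ℝ≥0∞)) * ∑ j, ∑' m,
        (w4 m * nc (fun x => ((g j x:ℝ):ℂ) * (((g j x:ℝ):ℂ) * u x)) m)^2 := by
        rw [Summable.tsum_finsetSum (fun j _ => ENNReal.summable)]
    _ = _ := rfl

end WindowAux

open scoped ENNReal
open WindowAux

/-- For `K ≥ 2` smooth window functions `g_j : 𝕋 → ℝ` with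
`Σ_j g_j(x)² = 1`, the windowing operator `Wu = (g_1 u, …, g_K u)` satisfies a two-sided
`H^{1/2}` norm equivalence: there are `0 < α ≤ β` with
`α‖Wu‖_{H^{1/2}} ≤ ‖u‖_{H^{1/2}} ≤ β‖Wu‖_{H^{1/2}}` for all `u ∈ H^{1/2}(𝕋)`. -/
theorem windowing_Hhalf_norm_equivalence
    (K : ℕ) (hK : 2 ≤ K) (g : Fin K → Circ → ℝ)
    (hg : ∀ j, SmoothOnCircle (g j))
    (hpart : ∀ x : Circ, ∑ j, (g j x) ^ 2 = 1) :
    ∃ α β : ℝ, 0 < α ∧ α ≤ β ∧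
      ∀ u : Circ → ℂ, MemLp u 2 haarAddCircle → MemSobolev (1 / 2) u →
        α * Real.sqrt (∑ j, sobolevNormSq (1 / 2) (fun x => ((g j x : ℝ) : ℂ) * u x)) ≤
            Real.sqrt (sobolevNormSq (1 / 2) u) ∧
          Real.sqrt (sobolevNormSq (1 / 2) u) ≤
            β * Real.sqrt (∑ j, sobolevNormSq (1 / 2) (fun x => ((g j x : ℝ) : ℂ) * u x)) := by
  have hcont : ∀ j, Continuous (fun x : Circ => ((g j x:ℝ):ℂ)) :=
    fun j => smooth_continuous (hg j)
  have hsumj : ∀ j, Summable (fun n => ‖fourierCoeff (fun x : Circ => ((g j x:ℝ):ℂ)) n‖) := by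
    intro j
    apply Summable.of_nonneg_of_le (fun n => norm_nonneg _) (fun n => ?_) (smooth_summable (hg j))
    have h1 : (1:ℝ) ≤ (2:ℝ)^((1:ℝ)/4) := one_le_rpow' one_le_two (by norm_num)
    have h2 : (1:ℝ) ≤ (1+(n:ℝ)^2)^((1:ℝ)/4) :=
      one_le_rpow' (by nlinarith [sq_nonneg ((n:ℝ))]) (by norm_num)
    nlinarith [norm_nonneg (fourierCoeff (fun x : Circ => ((g j x:ℝ):ℂ)) n),
      mul_le_mul h1 h2 zero_le_one (le_trans zero_le_one h1)]
  set A : Fin K → ℝ≥0∞ := fun j => ∑' n, Ag (fun x : Circ => ((g j x:ℝ):ℂ)) n with hA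
  have hAne : ∀ j, A j ≠ ⊤ := fun j => Ag_ne_top (hg j)
  set C : ℝ≥0∞ := (∑ j, A j) + 1 with hCdef
  have hCne : C ≠ ⊤ := by
    rw [hCdef]
    refine ENNReal.add_ne_top.mpr ⟨?_, ENNReal.one_ne_top⟩
    exact (ENNReal.sum_lt_top.mpr (fun j _ => (hAne j).lt_top)).ne
  have hC1 : (1:ℝ≥0∞) ≤ C := le_add_self
  have hCj : ∀ j, A j ≤ C := fun j =>
    le_trans (Finset.single_le_sum (fun i _ => zero_le) (Finset.mem_univ j)) le_self_add
  have hmulj : ∀ (v : Circ → ℂ), Integrable v haarAddCircle → ∀ j,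
      EE (fun x => ((g j x:ℝ):ℂ) * v x) ≤ C^2 * EE v := by
    intro v hv j
    refine le_trans (EE_mul_le _ (hcont j) (hsumj j) v hv) ?_
    exact mul_le_mul_left (pow_le_pow_left' (hCj j) 2) _
  set Bdn : ℝ≥0∞ := (K:ℝ≥0∞) * C^2 with hBdn
  set Bup : ℝ≥0∞ := (2*(K:ℝ≥0∞)) * C^2 with hBup
  have hK1 : (1:ℝ≥0∞) ≤ (K:ℝ≥0∞) := by
    have : (1:ℕ) ≤ K := by omega
    exact_mod_cast this
  have hC2 : (1:ℝ≥0∞) ≤ C^2 := by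
    calc (1:ℝ≥0∞) = 1^2 := (one_pow 2).symm
      _ ≤ C^2 := pow_le_pow_left' hC1 2
  have hBdn1 : (1:ℝ≥0∞) ≤ Bdn := by
    rw [hBdn]
    calc (1:ℝ≥0∞) = 1 * 1 := (one_mul 1).symm
      _ ≤ (K:ℝ≥0∞) * C^2 := mul_le_mul' hK1 hC2
  have hBup1 : (1:ℝ≥0∞) ≤ Bup := by
    rw [hBup]
    calc (1:ℝ≥0∞) = 1 * 1 := (one_mul 1).symm
      _ ≤ (2*(K:ℝ≥0∞)) * C^2 :=
          mul_le_mul' (hK1.trans (le_mul_of_one_le_left (zero_le) one_le_two)) hC2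
  have hBdn_ne : Bdn ≠ ⊤ := by
    rw [hBdn]; exact ENNReal.mul_ne_top (ENNReal.natCast_ne_top K) (ENNReal.pow_ne_top hCne)
  have hBup_ne : Bup ≠ ⊤ := by
    rw [hBup]
    exact ENNReal.mul_ne_top
      (ENNReal.mul_ne_top ENNReal.ofNat_ne_top (ENNReal.natCast_ne_top K))
      (ENNReal.pow_ne_top hCne)
  have hBdn_pos : 0 < Bdn.toReal :=
    ENNReal.toReal_pos (lt_of_lt_of_le zero_lt_one hBdn1).ne' hBdn_ne
  have hBup_pos : 0 < Bup.toReal :=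
    ENNReal.toReal_pos (lt_of_lt_of_le zero_lt_one hBup1).ne' hBup_ne
  set a : ℝ := 1 / Real.sqrt Bdn.toReal with ha
  set b : ℝ := Real.sqrt Bup.toReal with hb
  have ha_pos : 0 < a := by
    rw [ha]; exact one_div_pos.mpr (Real.sqrt_pos.mpr hBdn_pos)
  have hb_pos : 0 < b := by rw [hb]; exact Real.sqrt_pos.mpr hBup_pos
  refine ⟨min a b, max a b, lt_min ha_pos hb_pos,
    le_trans (min_le_left _ _) (le_max_left _ _), ?_⟩
  intro u hu hsob
  have hint : Integrable u haarAddCircle := hu.integrable one_le_two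
  have hEEu : EE u ≠ ⊤ := memSobolev_iff.mp hsob
  set P : ℝ≥0∞ := ∑ j, EE (fun x => ((g j x:ℝ):ℂ) * u x) with hPdef
  have hdn : P ≤ Bdn * EE u := by
    rw [hPdef, hBdn]
    calc ∑ j, EE (fun x => ((g j x:ℝ):ℂ) * u x) ≤ ∑ _j : Fin K, C^2 * EE u :=
        Finset.sum_le_sum (fun j _ => hmulj u hint j)
      _ = (K:ℝ≥0∞) * C^2 * EE u := by
          rw [Finset.sum_const, Finset.card_univ, Fintype.card_fin, nsmul_eq_mul, mul_assoc]
  have hup : EE u ≤ Bup * P := by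
    rw [hPdef, hBup]
    calc EE u ≤ (2*(K:ℝ≥0∞)) *
        ∑ j, EE (fun x => ((g j x:ℝ):ℂ) * (((g j x:ℝ):ℂ) * u x)) :=
          EE_le_sum g hcont hpart u hint
      _ ≤ (2*(K:ℝ≥0∞)) * ∑ j, C^2 * EE (fun x => ((g j x:ℝ):ℂ) * u x) := by
          apply mul_le_mul_right
          exact Finset.sum_le_sum (fun j _ =>
            hmulj (fun x => ((g j x:ℝ):ℂ) * u x) (integrable_mul (hcont j) hint) j)
      _ = (2*(K:ℝ≥0∞)) * C^2 * ∑ j, EE (fun x => ((g j x:ℝ):ℂ) * u x) := by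
          rw [← Finset.mul_sum]
          ring
  have hPne : P ≠ ⊤ := (lt_of_le_of_lt hdn
    (ENNReal.mul_ne_top hBdn_ne hEEu).lt_top).ne
  have hEEj_ne : ∀ j, EE (fun x => ((g j x:ℝ):ℂ) * u x) ≠ ⊤ := fun j =>
    (lt_of_le_of_lt (hmulj u hint j)
      (ENNReal.mul_ne_top (ENNReal.pow_ne_top hCne) hEEu).lt_top).ne
  have hsum_eq : ∑ j, sobolevNormSq (1/2) (fun x => ((g j x:ℝ):ℂ) * u x) = P.toReal := by
    rw [hPdef, ENNReal.toReal_sum (fun j _ => hEEj_ne j)]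
    exact Finset.sum_congr rfl (fun j _ => sobolev_toReal (hEEj_ne j))
  have hQ_eq : sobolevNormSq (1/2) u = (EE u).toReal := sobolev_toReal hEEu
  constructor
  · rw [hsum_eq, hQ_eq]
    have h1 : P.toReal ≤ Bdn.toReal * (EE u).toReal := by
      rw [← ENNReal.toReal_mul]
      exact ENNReal.toReal_mono (ENNReal.mul_ne_top hBdn_ne hEEu) hdn
    have h2 : Real.sqrt P.toReal ≤ Real.sqrt Bdn.toReal * Real.sqrt (EE u).toReal := by
      rw [← Real.sqrt_mul ENNReal.toReal_nonneg]
      exact Real.sqrt_le_sqrt h1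
    calc min a b * Real.sqrt P.toReal ≤ a * Real.sqrt P.toReal :=
        mul_le_mul_of_nonneg_right (min_le_left _ _) (Real.sqrt_nonneg _)
      _ ≤ Real.sqrt (EE u).toReal := by
          rw [ha, div_mul_eq_mul_div, one_mul, div_le_iff₀ (Real.sqrt_pos.mpr hBdn_pos)]
          calc Real.sqrt P.toReal ≤ Real.sqrt Bdn.toReal * Real.sqrt (EE u).toReal := h2
            _ = Real.sqrt (EE u).toReal * Real.sqrt Bdn.toReal := by ring
  · rw [hsum_eq, hQ_eq]
    have h1 : (EE u).toReal ≤ Bup.toReal * P.toReal := by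
      rw [← ENNReal.toReal_mul]
      exact ENNReal.toReal_mono (ENNReal.mul_ne_top hBup_ne hPne) hup
    calc Real.sqrt (EE u).toReal ≤ Real.sqrt (Bup.toReal * P.toReal) := Real.sqrt_le_sqrt h1
      _ = b * Real.sqrt P.toReal := by rw [hb, Real.sqrt_mul ENNReal.toReal_nonneg]
      _ ≤ max a b * Real.sqrt P.toReal :=
        mul_le_mul_of_nonneg_right (le_max_right _ _) (Real.sqrt_nonneg _)
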